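/- Let G=(V,E) be a finite simple undirected graph with n=|V| vertices and m=|E| edges, let 0 < p_e < 1/2 for all e ∈ E and 0 < λ_v ≤ 1 for all v ∈ V, and set η_v = (1−λ_v)/(1+λ_v). Define η̂_v = 1/n if η_v ≤ 1/n and η̂_v = η_v otherwise, and λ̂_v = (1−η̂_v)/(1+η̂_v). Let P_wrc and P̂_wrc be the lazy edge-flipping (Metropolis) dynamics for the weighted random cluster distributions with edge parameters (2p_e)_{e∈E} and vertex weights λ and λ̂, respectively. Then for all Z, Z' ⊆ E with |Z ⊕ Z'| ≤ 1, 1/2 ≤ P̂_wrc(Z,Z')/P_wrc(Z,Z') ≤ 2. -/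

import Mathlib

open Finset
open scoped Classical

noncomputable section

variable {V : Type*} [Fintype V] [DecidableEq V]

/-- The vertex set of the connected component of `v` in the graph `(V, S)`. -/
def compOf (S : Finset (Sym2 V)) (v : V) : Finset V :=
  Finset.univ.filter fun u => (SimpleGraph.fromEdgeSet (↑S : Set (Sym2 V))).Reachable v u

/-- `κ(V,S)`: the set of vertex sets of connected components of the graph `(V, S)`. -/
def kappa (S : Finset (Sym2 V)) : Finset (Finset V) :=
  Finset.univ.image (compOf S)

/-- `∏_{C ∈ κ(V,S)} (1 + ∏_{u ∈ C} λ_u)`. -/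
def clusterProd (S : Finset (Sym2 V)) (lam : V → ℝ) : ℝ :=
  ∏ C ∈ kappa S, (1 + ∏ u ∈ C, lam u)

/-- Weight of an edge subset `S ⊆ E₀` in the weighted random cluster model. -/
def wtWRC (E₀ : Finset (Sym2 V)) (q : Sym2 V → ℝ) (lam : V → ℝ) (S : Finset (Sym2 V)) : ℝ :=
  (∏ e ∈ S, q e) * (∏ f ∈ E₀ \ S, (1 - q f)) * clusterProd S lam

/-- Partition function of the weighted random cluster model. -/
def ZWRC (E₀ : Finset (Sym2 V)) (q : Sym2 V → ℝ) (lam : V → ℝ) : ℝ :=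
  ∑ S ∈ E₀.powerset, wtWRC E₀ q lam S

/-- The weighted random cluster distribution. -/
def piWRC (E₀ : Finset (Sym2 V)) (q : Sym2 V → ℝ) (lam : V → ℝ) (S : Finset (Sym2 V)) : ℝ :=
  wtWRC E₀ q lam S / ZWRC E₀ q lam

/-- The monochromatic edges of a spin configuration `σ`. -/
def monoEdges (E₀ : Finset (Sym2 V)) (σ : V → Bool) : Finset (Sym2 V) :=
  E₀.filter fun e => (e.map σ).IsDiag

/-- Weight of a spin configuration in the Ising model. -/
def wtIsing (E₀ : Finset (Sym2 V)) (β : Sym2 V → ℝ) (lam : V → ℝ) (σ : V → Bool) : ℝ :=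
  (∏ e ∈ monoEdges E₀ σ, β e) * ∏ v : V, (if σ v then lam v else 1)

/-- Ising partition function. -/
def ZIsing (E₀ : Finset (Sym2 V)) (β : Sym2 V → ℝ) (lam : V → ℝ) : ℝ :=
  ∑ σ : V → Bool, wtIsing E₀ β lam σ

/-- Ising Gibbs distribution. -/
def piIsing (E₀ : Finset (Sym2 V)) (β : Sym2 V → ℝ) (lam : V → ℝ) (σ : V → Bool) : ℝ :=
  wtIsing E₀ β lam σ / ZIsing E₀ β lam

/-- Vertices of odd degree in the graph `(V, S)`. -/
def oddVerts (S : Finset (Sym2 V)) : Finset V :=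
  Finset.univ.filter fun v => Odd (S.filter fun e => v ∈ e).card

/-- Weight of an edge subset in the subgraph-world model. -/
def wtSG (E₀ : Finset (Sym2 V)) (p : Sym2 V → ℝ) (η : V → ℝ) (S : Finset (Sym2 V)) : ℝ :=
  (∏ e ∈ S, p e) * (∏ f ∈ E₀ \ S, (1 - p f)) * ∏ v ∈ oddVerts S, η v

/-- Subgraph-world partition function. -/
def ZSG (E₀ : Finset (Sym2 V)) (p : Sym2 V → ℝ) (η : V → ℝ) : ℝ :=
  ∑ S ∈ E₀.powerset, wtSG E₀ p η S

/-- Subgraph-world distribution. -/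
def piSG (E₀ : Finset (Sym2 V)) (p : Sym2 V → ℝ) (η : V → ℝ) (S : Finset (Sym2 V)) : ℝ :=
  wtSG E₀ p η S / ZSG E₀ p η

/-- The transformation `P_{I→R}` from Ising configurations to edge subsets. -/
def PIR (E₀ : Finset (Sym2 V)) (β : Sym2 V → ℝ) (σ : V → Bool) (S : Finset (Sym2 V)) : ℝ :=
  if S ⊆ monoEdges E₀ σ then
    (∏ e ∈ S, (1 - (β e)⁻¹)) * ∏ f ∈ monoEdges E₀ σ \ S, (β f)⁻¹
  else 0

/-- The transformation `P_{R→I}` from edge subsets to Ising configurations. -/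
def PRI (E₀ : Finset (Sym2 V)) (lam : V → ℝ) (S : Finset (Sym2 V)) (σ : V → Bool) : ℝ :=
  if S ⊆ monoEdges E₀ σ then
    ∏ C ∈ kappa S, ((∏ v ∈ C, if σ v then lam v else 1) / (1 + ∏ v ∈ C, lam v))
  else 0

/-- Swendsen-Wang dynamics for the Ising model: `P_{I→R} ⬝ P_{R→I}`. -/
def PSWIsing (E₀ : Finset (Sym2 V)) (β : Sym2 V → ℝ) (lam : V → ℝ) (σ τ : V → Bool) : ℝ :=
  ∑ S ∈ E₀.powerset, PIR E₀ β σ S * PRI E₀ lam S τ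

/-- Swendsen-Wang dynamics for the weighted random cluster model: `P_{R→I} ⬝ P_{I→R}`. -/
def PSWwrc (E₀ : Finset (Sym2 V)) (β : Sym2 V → ℝ) (lam : V → ℝ)
    (S S' : Finset (Sym2 V)) : ℝ :=
  ∑ σ : V → Bool, PRI E₀ lam S σ * PIR E₀ β σ S'

/-- Lazy edge-flipping (Metropolis) dynamics for a distribution `pi` on subsets of `E₀`. -/
def PEF (E₀ : Finset (Sym2 V)) (pi : Finset (Sym2 V) → ℝ) (x y : Finset (Sym2 V)) : ℝ :=
  if x = y then
    1 - (1 / (2 * (E₀.card : ℝ))) * ∑ e ∈ E₀, min 1 (pi (symmDiff x {e}) / pi x)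
  else if (symmDiff x y).card = 1 then
    (1 / (2 * (E₀.card : ℝ))) * min 1 (pi y / pi x)
  else 0

/-- Variance of `f` with respect to a distribution `pi` supported on `states`. -/
def varOn {α : Type*} (states : Finset α) (pi f : α → ℝ) : ℝ :=
  (∑ x ∈ states, pi x * f x ^ 2) - (∑ x ∈ states, pi x * f x) ^ 2

/-- Dirichlet form of a Markov kernel `P` with stationary distribution `pi` on `states`. -/
def dirichletOn {α : Type*} (states : Finset α) (pi : α → ℝ) (P : α → α → ℝ) (f : α → ℝ) : ℝ :=
  ∑ x ∈ states, pi x * f x * (f x - ∑ y ∈ states, P x y * f y)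

/-- Spectral gap of a reversible Markov kernel `P` with stationary distribution `pi`. -/
def gapOn {α : Type*} (states : Finset α) (pi : α → ℝ) (P : α → α → ℝ) : ℝ :=
  sInf ((fun f : α → ℝ => dirichletOn states pi P f / varOn states pi f) ''
    {f | varOn states pi f ≠ 0})

/-- Total variation distance between two distributions on `states`. -/
def dTV {α : Type*} (states : Finset α) (μ ν : α → ℝ) : ℝ :=
  (1 / 2) * ∑ z ∈ states, |μ z - ν z|

/-- `t`-step transition probabilities of the Markov kernel `P` on state space `states`. -/
def kpow {α : Type*} (states : Finset α) (P : α → α → ℝ) : ℕ → α → α → ℝ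
  | 0 => fun x y => if x = y then 1 else 0
  | (t + 1) => fun x y => ∑ z ∈ states, P x z * kpow states P t z y

/-!
Only the cluster factor `∏_{C ∈ κ(V,S)} (1 + ∏_{u ∈ C} λ_u)` of the weight depends on the vertex
weights. Adding an edge either keeps the clusters or merges two clusters of weights
`a, b ∈ [0, 1]`, which multiplies this factor by `(1 + a b) / ((1 + a) (1 + b)) ∈ [1/2, 1]`.
Since `t ↦ (1 - t) / (1 + t)` maps `[0, 1]` into itself, both `λ` and `λ̂` take values in
`[0, 1]`, so for neighbouring `Z, Z'` the Metropolis ratios `π(Z') / π(Z)` of the two models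
differ by a factor at most `2`, and hence so do the off-diagonal transition probabilities. By
laziness the diagonal ones both lie in `[1/2, 1]`.
-/

theorem one_sub_div_one_add_mem_Icc {t : ℝ} (ht : t ∈ Set.Icc 0 1) :
    (1 - t) / (1 + t) ∈ Set.Icc 0 1 :=
  ⟨div_nonneg (sub_nonneg.mpr ht.2) (by linarith [ht.1]),
    (div_le_one (by linarith [ht.1])).mpr (by linarith [ht.1])⟩

open SimpleGraph

theorem SimpleGraph.reachable_fromEdgeSet_insert_iff {α : Type*} {s : Set (Sym2 α)}
    {u v x y : α} :
    (fromEdgeSet (insert s(u, v) s)).Reachable x y ↔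
      (fromEdgeSet s).Reachable x y ∨
        ((fromEdgeSet s).Reachable x u ∧ (fromEdgeSet s).Reachable v y) ∨
        ((fromEdgeSet s).Reachable x v ∧ (fromEdgeSet s).Reachable u y) := by
  have hle : fromEdgeSet s ≤ fromEdgeSet (insert s(u, v) s) :=
    fromEdgeSet_mono (Set.subset_insert _ _)
  constructor
  · rintro ⟨w⟩
    induction w with
    | nil => exact Or.inl .rfl
    | @cons a b c hab _ ih =>
      obtain ⟨hab | hab, hne⟩ := (fromEdgeSet_adj _).mp hab
      · rcases Sym2.eq_iff.mp hab with ⟨rfl, rfl⟩ | ⟨rfl, rfl⟩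
        · rcases ih with h | ⟨-, h⟩ | ⟨-, h⟩
          exacts [.inr (.inl ⟨.rfl, h⟩), .inr (.inl ⟨.rfl, h⟩), .inl h]
        · rcases ih with h | ⟨-, h⟩ | ⟨-, h⟩
          exacts [.inr (.inr ⟨.rfl, h⟩), .inl h, .inr (.inr ⟨.rfl, h⟩)]
      · have hab : (fromEdgeSet s).Reachable a b :=
          ((fromEdgeSet_adj _).mpr ⟨hab, hne⟩).reachable
        rcases ih with h | ⟨h, h'⟩ | ⟨h, h'⟩
        exacts [.inl (hab.trans h), .inr (.inl ⟨hab.trans h, h'⟩),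
          .inr (.inr ⟨hab.trans h, h'⟩)]
  · have huv : (fromEdgeSet (insert s(u, v) s)).Reachable u v := by
      by_cases h : u = v
      · exact h ▸ .rfl
      · exact Adj.reachable (by simp [h])
    rintro (h | ⟨h, h'⟩ | ⟨h, h'⟩)
    · exact h.mono hle
    · exact ((h.mono hle).trans huv).trans (h'.mono hle)
    · exact ((h.mono hle).trans huv.symm).trans (h'.mono hle)

theorem Finset.eq_insert_or_eq_insert_of_symmDiff_eq_singleton {α : Type*} [DecidableEq α]
    {s t : Finset α} {e : α} (h : symmDiff s t = {e}) : t = insert e s ∨ s = insert e t := by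
  have hmem : ∀ f, (f ∈ s ∧ f ∉ t ∨ f ∈ t ∧ f ∉ s) ↔ f = e := fun f => by
    rw [← Finset.mem_symmDiff, h, Finset.mem_singleton]
  by_cases hs : e ∈ s
  · right
    ext f
    grind
  · left
    ext f
    grind

section Components

variable {S : Finset (Sym2 V)} {u v w x : V}

theorem mem_compOf : x ∈ compOf S v ↔ (fromEdgeSet (S : Set (Sym2 V))).Reachable v x := by
  simp [compOf]

theorem compOf_eq_compOf_iff :
    compOf S v = compOf S w ↔ (fromEdgeSet (S : Set (Sym2 V))).Reachable v w := by
  refine ⟨fun h => mem_compOf.mp (h ▸ mem_compOf.mpr .rfl), fun h => ?_⟩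
  ext x
  simp only [mem_compOf]
  exact ⟨h.symm.trans, h.trans⟩

theorem mem_kappa {C : Finset V} : C ∈ kappa S ↔ ∃ w, compOf S w = C := by
  simp [kappa]

theorem disjoint_compOf (h : ¬(fromEdgeSet (S : Set (Sym2 V))).Reachable u v) :
    Disjoint (compOf S u) (compOf S v) :=
  Finset.disjoint_left.mpr fun _ hu hv => h ((mem_compOf.mp hu).trans (mem_compOf.mp hv).symm)

theorem union_compOf_notMem_kappa (h : ¬(fromEdgeSet (S : Set (Sym2 V))).Reachable u v) :
    compOf S u ∪ compOf S v ∉ kappa S := by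
  intro hC
  obtain ⟨w, hw⟩ := mem_kappa.mp hC
  have hu : u ∈ compOf S w := hw ▸ Finset.mem_union_left _ (mem_compOf.mpr .rfl)
  have hv : v ∈ compOf S w := hw ▸ Finset.mem_union_right _ (mem_compOf.mpr .rfl)
  exact h ((mem_compOf.mp hu).symm.trans (mem_compOf.mp hv))

theorem compOf_insert_of_reachable_or
    (hw : (fromEdgeSet (S : Set (Sym2 V))).Reachable u w ∨
      (fromEdgeSet (S : Set (Sym2 V))).Reachable v w) :
    compOf (insert s(u, v) S) w = compOf S u ∪ compOf S v := by
  ext x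
  simp only [mem_compOf, Finset.mem_union, Finset.coe_insert, reachable_fromEdgeSet_insert_iff]
  rcases hw with hw | hw
  · constructor
    · rintro (h | ⟨-, h⟩ | ⟨-, h⟩)
      exacts [.inl (hw.trans h), .inr h, .inl h]
    · rintro (h | h)
      exacts [.inl (hw.symm.trans h), .inr (.inl ⟨hw.symm, h⟩)]
  · constructor
    · rintro (h | ⟨-, h⟩ | ⟨-, h⟩)
      exacts [.inr (hw.trans h), .inr h, .inl h]
    · rintro (h | h)
      exacts [.inr (.inr ⟨hw.symm, h⟩), .inl (hw.symm.trans h)]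

theorem compOf_insert_of_not_reachable
    (hu : ¬(fromEdgeSet (S : Set (Sym2 V))).Reachable u w)
    (hv : ¬(fromEdgeSet (S : Set (Sym2 V))).Reachable v w) :
    compOf (insert s(u, v) S) w = compOf S w := by
  ext x
  simp only [mem_compOf, Finset.coe_insert, reachable_fromEdgeSet_insert_iff]
  refine or_iff_left ?_
  rintro (⟨h, -⟩ | ⟨h, -⟩)
  exacts [hu h.symm, hv h.symm]

theorem kappa_insert (u v : V) (S : Finset (Sym2 V)) :
    kappa (insert s(u, v) S) =
      insert (compOf S u ∪ compOf S v) (((kappa S).erase (compOf S u)).erase (compOf S v)) := by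
  ext C
  simp only [Finset.mem_insert, Finset.mem_erase, mem_kappa]
  constructor
  · rintro ⟨w, rfl⟩
    by_cases hw : (fromEdgeSet (S : Set (Sym2 V))).Reachable u w ∨
        (fromEdgeSet (S : Set (Sym2 V))).Reachable v w
    · exact .inl (compOf_insert_of_reachable_or hw)
    · rw [not_or] at hw
      rw [compOf_insert_of_not_reachable hw.1 hw.2]
      exact .inr ⟨mt compOf_eq_compOf_iff.mp fun h => hw.2 h.symm,
        mt compOf_eq_compOf_iff.mp fun h => hw.1 h.symm, w, rfl⟩
  · rintro (rfl | ⟨hv, hu, w, rfl⟩)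
    · exact ⟨u, compOf_insert_of_reachable_or (.inl .rfl)⟩
    · exact ⟨w, compOf_insert_of_not_reachable (fun h => hu (compOf_eq_compOf_iff.mpr h).symm)
        (fun h => hv (compOf_eq_compOf_iff.mpr h).symm)⟩

end Components

section ClusterProd

variable {S : Finset (Sym2 V)} {u v : V} {μ ν : V → ℝ}

theorem clusterProd_insert_of_reachable (h : (fromEdgeSet (S : Set (Sym2 V))).Reachable u v)
    (μ : V → ℝ) : clusterProd (insert s(u, v) S) μ = clusterProd S μ := by
  rw [clusterProd, kappa_insert, ← compOf_eq_compOf_iff.mpr h, Finset.union_self,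
    Finset.erase_idem, Finset.insert_erase (mem_kappa.mpr ⟨u, rfl⟩), clusterProd]

theorem clusterProd_insert_mul_of_not_reachable
    (h : ¬(fromEdgeSet (S : Set (Sym2 V))).Reachable u v) (μ : V → ℝ) :
    clusterProd (insert s(u, v) S) μ *
        ((1 + ∏ x ∈ compOf S u, μ x) * (1 + ∏ x ∈ compOf S v, μ x)) =
      clusterProd S μ * (1 + (∏ x ∈ compOf S u, μ x) * ∏ x ∈ compOf S v, μ x) := by
  have hA : compOf S u ∈ kappa S := mem_kappa.mpr ⟨u, rfl⟩
  have hB : compOf S v ∈ (kappa S).erase (compOf S u) :=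
    Finset.mem_erase.mpr
      ⟨mt compOf_eq_compOf_iff.mp fun h' => h h'.symm, mem_kappa.mpr ⟨v, rfl⟩⟩
  have hU : compOf S u ∪ compOf S v ∉ ((kappa S).erase (compOf S u)).erase (compOf S v) :=
    fun hU => union_compOf_notMem_kappa h (Finset.mem_of_mem_erase (Finset.mem_of_mem_erase hU))
  rw [clusterProd, clusterProd, kappa_insert, Finset.prod_insert hU,
    Finset.prod_union (disjoint_compOf h), ← Finset.mul_prod_erase _ _ hA,
    ← Finset.mul_prod_erase _ _ hB]
  ring

theorem clusterProd_pos (hμ : ∀ v, 0 ≤ μ v) (S : Finset (Sym2 V)) : 0 < clusterProd S μ :=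
  Finset.prod_pos fun _ _ =>
    add_pos_of_pos_of_nonneg one_pos (Finset.prod_nonneg fun v _ => hμ v)

theorem clusterProd_insert_mem_Icc (hμ : ∀ v, μ v ∈ Set.Icc 0 1) (e : Sym2 V)
    (S : Finset (Sym2 V)) :
    clusterProd (insert e S) μ ∈ Set.Icc (clusterProd S μ / 2) (clusterProd S μ) := by
  have hc := clusterProd_pos (fun v => (hμ v).1) S
  induction e using Sym2.ind with | _ u v => ?_
  by_cases h : (fromEdgeSet (S : Set (Sym2 V))).Reachable u v
  · rw [clusterProd_insert_of_reachable h]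
    constructor <;> linarith
  have key := clusterProd_insert_mul_of_not_reachable h μ
  have hprod (C : Finset V) : ∏ x ∈ C, μ x ∈ Set.Icc 0 1 :=
    ⟨Finset.prod_nonneg fun x _ => (hμ x).1,
      Finset.prod_le_one (fun x _ => (hμ x).1) fun x _ => (hμ x).2⟩
  have ha := hprod (compOf S u)
  have hb := hprod (compOf S v)
  set a := ∏ x ∈ compOf S u, μ x
  set b := ∏ x ∈ compOf S v, μ x
  have hP : 0 < (1 + a) * (1 + b) := by nlinarith [ha.1, hb.1]
  constructor
  · refine le_of_mul_le_mul_right ?_ hP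
    rw [key]
    nlinarith [mul_nonneg hc.le (mul_nonneg (sub_nonneg.mpr ha.2) (sub_nonneg.mpr hb.2))]
  · refine le_of_mul_le_mul_right ?_ hP
    rw [key]
    nlinarith [mul_nonneg hc.le (add_nonneg ha.1 hb.1)]

theorem clusterProd_div_le_two_mul_div (hμ : ∀ v, μ v ∈ Set.Icc 0 1)
    (hν : ∀ v, ν v ∈ Set.Icc 0 1) {x y : Finset (Sym2 V)} (hxy : (symmDiff x y).card ≤ 1) :
    clusterProd y ν / clusterProd x ν ≤ 2 * (clusterProd y μ / clusterProd x μ) := by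
  have hμ₀ := clusterProd_pos fun v => (hμ v).1
  have hν₀ := clusterProd_pos fun v => (hν v).1
  rcases Nat.le_one_iff_eq_zero_or_eq_one.mp hxy with h | h
  · rw [symmDiff_eq_bot.mp (Finset.card_eq_zero.mp h), div_self (hμ₀ y).ne',
      div_self (hν₀ y).ne']
    norm_num
  obtain ⟨e, he⟩ := Finset.card_eq_one.mp h
  rcases Finset.eq_insert_or_eq_insert_of_symmDiff_eq_singleton he with rfl | rfl
  · obtain ⟨hμ₁, -⟩ := clusterProd_insert_mem_Icc hμ e x
    obtain ⟨-, hν₂⟩ := clusterProd_insert_mem_Icc hν e x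
    calc clusterProd (insert e x) ν / clusterProd x ν ≤ 1 := (div_le_one (hν₀ x)).mpr hν₂
      _ ≤ 2 * (clusterProd (insert e x) μ / clusterProd x μ) := by
        rw [← div_le_iff₀' two_pos, le_div_iff₀ (hμ₀ x)]; linarith
  · obtain ⟨-, hμ₂⟩ := clusterProd_insert_mem_Icc hμ e y
    obtain ⟨hν₁, -⟩ := clusterProd_insert_mem_Icc hν e y
    calc clusterProd y ν / clusterProd (insert e y) ν ≤ 2 := by
          rw [div_le_iff₀ (hν₀ _)]; linarith
      _ ≤ 2 * (clusterProd y μ / clusterProd (insert e y) μ) := by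
        rw [le_mul_iff_one_le_right two_pos, one_le_div (hμ₀ _)]; exact hμ₂

end ClusterProd

section WeightedRandomCluster

variable {E₀ S x y : Finset (Sym2 V)} {q : Sym2 V → ℝ} {μ ν : V → ℝ}

omit [Fintype V] in
def edgeWeight (E₀ : Finset (Sym2 V)) (q : Sym2 V → ℝ) (S : Finset (Sym2 V)) : ℝ :=
  (∏ e ∈ S, q e) * ∏ f ∈ E₀ \ S, (1 - q f)

theorem wtWRC_eq_edgeWeight_mul_clusterProd (E₀ : Finset (Sym2 V)) (q : Sym2 V → ℝ)
    (μ : V → ℝ) (S : Finset (Sym2 V)) :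
    wtWRC E₀ q μ S = edgeWeight E₀ q S * clusterProd S μ :=
  rfl

omit [Fintype V] in
theorem edgeWeight_pos (hq : ∀ e ∈ E₀, q e ∈ Set.Ioo 0 1) (hS : S ⊆ E₀) :
    0 < edgeWeight E₀ q S :=
  mul_pos (Finset.prod_pos fun e he => (hq e (hS he)).1)
    (Finset.prod_pos fun f hf => sub_pos.mpr (hq f (Finset.mem_sdiff.mp hf).1).2)

theorem wtWRC_pos (hq : ∀ e ∈ E₀, q e ∈ Set.Ioo 0 1) (hμ : ∀ v, 0 ≤ μ v) (hS : S ⊆ E₀) :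
    0 < wtWRC E₀ q μ S :=
  mul_pos (edgeWeight_pos hq hS) (clusterProd_pos hμ S)

theorem ZWRC_pos (hq : ∀ e ∈ E₀, q e ∈ Set.Ioo 0 1) (hμ : ∀ v, 0 ≤ μ v) :
    0 < ZWRC E₀ q μ :=
  Finset.sum_pos (fun _ hS => wtWRC_pos hq hμ (Finset.mem_powerset.mp hS))
    (Finset.powerset_nonempty _)

theorem piWRC_pos (hq : ∀ e ∈ E₀, q e ∈ Set.Ioo 0 1) (hμ : ∀ v, 0 ≤ μ v) (hS : S ⊆ E₀) :
    0 < piWRC E₀ q μ S :=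
  div_pos (wtWRC_pos hq hμ hS) (ZWRC_pos hq hμ)

theorem piWRC_div_piWRC (hq : ∀ e ∈ E₀, q e ∈ Set.Ioo 0 1) (hμ : ∀ v, 0 ≤ μ v) :
    piWRC E₀ q μ y / piWRC E₀ q μ x =
      edgeWeight E₀ q y / edgeWeight E₀ q x * (clusterProd y μ / clusterProd x μ) := by
  rw [piWRC, piWRC, div_div_div_cancel_right₀ (ZWRC_pos hq hμ).ne',
    wtWRC_eq_edgeWeight_mul_clusterProd, wtWRC_eq_edgeWeight_mul_clusterProd, mul_div_mul_comm]

theorem piWRC_div_le_two_mul_div (hq : ∀ e ∈ E₀, q e ∈ Set.Ioo 0 1)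
    (hμ : ∀ v, μ v ∈ Set.Icc 0 1) (hν : ∀ v, ν v ∈ Set.Icc 0 1) (hx : x ⊆ E₀) (hy : y ⊆ E₀)
    (hxy : (symmDiff x y).card ≤ 1) :
    piWRC E₀ q ν y / piWRC E₀ q ν x ≤ 2 * (piWRC E₀ q μ y / piWRC E₀ q μ x) := by
  rw [piWRC_div_piWRC hq fun v => (hν v).1, piWRC_div_piWRC hq fun v => (hμ v).1,
    mul_left_comm]
  exact mul_le_mul_of_nonneg_left (clusterProd_div_le_two_mul_div hμ hν hxy)
    (div_pos (edgeWeight_pos hq hy) (edgeWeight_pos hq hx)).le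

end WeightedRandomCluster

section EdgeFlip

variable {E₀ x y : Finset (Sym2 V)} {π π' : Finset (Sym2 V) → ℝ}

theorem PEF_self_mem_Icc (hπ : ∀ S ⊆ E₀, 0 ≤ π S) (hx : x ⊆ E₀) :
    PEF E₀ π x x ∈ Set.Icc (1 / 2) 1 := by
  have hterm : ∀ e ∈ E₀, min 1 (π (symmDiff x {e}) / π x) ∈ Set.Icc 0 1 := fun e he =>
    ⟨le_min zero_le_one (div_nonneg (hπ _ (symmDiff_le_sup.trans
      (Finset.union_subset hx (Finset.singleton_subset_iff.mpr he)))) (hπ x hx)),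
      min_le_left _ _⟩
  have hsum₀ := Finset.sum_nonneg fun e he => (hterm e he).1
  have hsum₁ : ∑ e ∈ E₀, min 1 (π (symmDiff x {e}) / π x) ≤ E₀.card := by
    simpa using Finset.sum_le_sum fun e he => (hterm e he).2
  have hc : 1 / (2 * (E₀.card : ℝ)) * E₀.card ≤ 1 / 2 := by
    rcases (Nat.zero_le E₀.card).eq_or_lt with h | h
    · simp [← h]
    · exact (by field_simp : 1 / (2 * (E₀.card : ℝ)) * E₀.card = 1 / 2).le
  have hc₀ : (0 : ℝ) ≤ 1 / (2 * E₀.card) := by positivity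
  rw [PEF, if_pos rfl]
  constructor
  · linarith [mul_le_mul_of_nonneg_left hsum₁ hc₀]
  · linarith [mul_nonneg hc₀ hsum₀]

theorem PEF_pos (hπ : ∀ S ⊆ E₀, 0 < π S) (hx : x ⊆ E₀) (hy : y ⊆ E₀)
    (hxy : (symmDiff x y).card ≤ 1) : 0 < PEF E₀ π x y := by
  by_cases h : x = y
  · subst h
    exact one_half_pos.trans_le (PEF_self_mem_Icc (fun S hS => (hπ S hS).le) hx).1
  have h₁ : (symmDiff x y).card = 1 :=
    le_antisymm hxy (Finset.card_pos.mpr (Finset.nonempty_iff_ne_empty.mpr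
      (mt symmDiff_eq_bot.mp h)))
  have hE : 0 < E₀.card := by
    have := Finset.card_le_card (symmDiff_le_sup.trans (Finset.union_subset hx hy))
    omega
  rw [PEF, if_neg h, if_pos h₁]
  exact mul_pos (by positivity) (lt_min one_pos (div_pos (hπ y hy) (hπ x hx)))

theorem PEF_le_two_mul (hπ : ∀ S ⊆ E₀, 0 ≤ π S) (hπ' : ∀ S ⊆ E₀, 0 ≤ π' S) (hx : x ⊆ E₀)
    (h : π' y / π' x ≤ 2 * (π y / π x)) :
    PEF E₀ π' x y ≤ 2 * PEF E₀ π x y := by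
  by_cases hxy : x = y
  · subst hxy
    linarith [(PEF_self_mem_Icc hπ hx).1, (PEF_self_mem_Icc hπ' hx).2]
  rw [PEF, PEF, if_neg hxy, if_neg hxy]
  split_ifs
  · rw [mul_left_comm]
    gcongr
    calc min 1 (π' y / π' x) ≤ min 2 (2 * (π y / π x)) := min_le_min one_le_two h
      _ = 2 * min 1 (π y / π x) := by rw [mul_min_of_nonneg _ _ zero_le_two, mul_one]
  · simp

end EdgeFlip

/-- Comparison of the transition probabilities of the edge-flipping dynamics for the weighted
random cluster model and its perturbed version: for transitions `(Z,Z')` with `|Z ⊕ Z'| ≤ 1`,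
the ratio of the two transition probabilities lies in `[1/2, 2]`. -/
theorem wrc_perturb_tran_ratio {V : Type*} [Fintype V] [DecidableEq V]
    (G : SimpleGraph V) [DecidableRel G.Adj]
    (p : Sym2 V → ℝ) (lam η ηh lamh : V → ℝ)
    (hp : ∀ e ∈ G.edgeFinset, 0 < p e ∧ p e < 1 / 2)
    (hlam : ∀ v : V, 0 < lam v ∧ lam v ≤ 1)
    (hη : ∀ v : V, η v = (1 - lam v) / (1 + lam v))
    (hηh : ∀ v : V, ηh v =
      if η v ≤ 1 / (Fintype.card V : ℝ) then 1 / (Fintype.card V : ℝ) else η v)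
    (hlamh : ∀ v : V, lamh v = (1 - ηh v) / (1 + ηh v)) :
    ∀ Z ∈ G.edgeFinset.powerset, ∀ Z' ∈ G.edgeFinset.powerset,
      (symmDiff Z Z').card ≤ 1 →
      1 / 2 ≤ PEF G.edgeFinset (piWRC G.edgeFinset (fun e => 2 * p e) lamh) Z Z' /
          PEF G.edgeFinset (piWRC G.edgeFinset (fun e => 2 * p e) lam) Z Z' ∧
        PEF G.edgeFinset (piWRC G.edgeFinset (fun e => 2 * p e) lamh) Z Z' /
          PEF G.edgeFinset (piWRC G.edgeFinset (fun e => 2 * p e) lam) Z Z' ≤ 2 := by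
  intro Z hZ Z' hZ' hZZ'
  rw [Finset.mem_powerset] at hZ hZ'
  have hq : ∀ e ∈ G.edgeFinset, 2 * p e ∈ Set.Ioo 0 1 := fun e he =>
    ⟨by linarith [hp e he], by linarith [hp e he]⟩
  have hlam' : ∀ v, lam v ∈ Set.Icc 0 1 := fun v => ⟨(hlam v).1.le, (hlam v).2⟩
  have hlamh' : ∀ v, lamh v ∈ Set.Icc 0 1 := fun v => by
    rw [hlamh v, hηh v, hη v]
    refine one_sub_div_one_add_mem_Icc ?_
    split_ifs
    · exact ⟨by positivity, by simpa using Nat.cast_inv_le_one (Fintype.card V)⟩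
    · exact one_sub_div_one_add_mem_Icc (hlam' v)
  have hπ : ∀ {μ : V → ℝ}, (∀ v, μ v ∈ Set.Icc 0 1) →
      ∀ S ⊆ G.edgeFinset, 0 < piWRC G.edgeFinset (fun e => 2 * p e) μ S :=
    fun hμ _ hS => piWRC_pos hq (fun v => (hμ v).1) hS
  have hpos := PEF_pos (hπ hlam') hZ hZ' hZZ'
  have hup := PEF_le_two_mul (fun S hS => (hπ hlam' S hS).le) (fun S hS => (hπ hlamh' S hS).le)
    hZ (piWRC_div_le_two_mul_div hq hlam' hlamh' hZ hZ' hZZ')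
  have hlow := PEF_le_two_mul (fun S hS => (hπ hlamh' S hS).le) (fun S hS => (hπ hlam' S hS).le)
    hZ (piWRC_div_le_two_mul_div hq hlamh' hlam' hZ hZ' hZZ')
  exact ⟨by rw [le_div_iff₀ hpos]; linarith, by rw [div_le_iff₀ hpos]; linarith⟩

end
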